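/- arXiv:2511.10230 — 5 statements merged into one kernel-verified Lean document; each statement's English description precedes it below -/
import Mathlib

section
/- Let H be a graph with at least one edge, let G be a d-degenerate graph for some d > 0, and let 𝓗 be a set of edge-disjoint copies of H in G with |𝓗| ≥ α·|V(G)|. Then there exists 𝓗' ⊆ 𝓗 with |𝓗'| ≥ α·|V(G)|/2 such that the subgraph G[𝓗'] of G induced by the union of the copies in 𝓗' is (α/4d)-degree preserving: it has at least (α/4d)·|V(G)| vertices and every vertex v of G[𝓗'] satisfies deg_{G[𝓗']}(v) ≥ (α/4d)·deg_G(v). -/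
open SimpleGraph

variable {α β : Type*}

/-- A copy of `H` in `G`: an injective map sending edges to edges. -/
def IsCopy (H : SimpleGraph α) (G : SimpleGraph β) (f : α → β) : Prop :=
  Function.Injective f ∧ ∀ a b, H.Adj a b → G.Adj (f a) (f b)

/-- The edge set of the image of a copy. -/
def copyEdges (H : SimpleGraph α) (f : α → β) : Set (Sym2 β) :=
  Sym2.map f '' H.edgeSet

/-- The subgraph `G[𝓗]` of `G` induced by the union of the edge images of the copies
in `𝓗` (as a graph on the same vertex type; its vertices are its support). -/
noncomputable def unionGraph (H : SimpleGraph α) (𝓗 : Finset (α → β)) : SimpleGraph β :=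
  SimpleGraph.fromEdgeSet (⋃ f ∈ 𝓗, copyEdges H f)

/-- `G` is `d`-degenerate: every nonempty (induced) subgraph has a vertex of degree at
most `d`. -/
def DegenerateLE [Fintype β] (G : SimpleGraph β) (d : ℕ) : Prop :=
  ∀ s : Finset β, s.Nonempty → ∃ v ∈ s, ({w ∈ (s : Set β) | G.Adj v w}.ncard ≤ d)

/-- `G'` is a `c`-degree-preserving subgraph of `G`: it has at least `c·|V(G)|` vertices
and every one of its vertices keeps at least a `c`-fraction of its `G`-degree. -/
def DegreePreserving [Fintype β] (G G' : SimpleGraph β) (c : ℝ) : Prop :=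
  (G'.support.ncard : ℝ) ≥ c * Fintype.card β ∧
  ∀ v ∈ G'.support, ((G'.neighborSet v).ncard : ℝ) ≥ c * (G.neighborSet v).ncard

/-!
Delete copies greedily: while some vertex `v` of the current union graph keeps less than a
`c`-fraction of its `G`-degree, `c = α/4d`, remove every copy through `v`. By edge-disjointness
these copies use distinct edges at `v`, so fewer than `c·deg_G v` copies are lost, and `v` never
returns to the support. With `n = |V(G)|`, at most `c·∑ deg_G = 2c·|E(G)| ≤ 2cd·n = αn/2` copies
are lost in total. The survivors still span at least `αn/2` edges, and a subgraph of a
`d`-degenerate graph has at most `d` edges per vertex, so they cover at least `αn/2d` vertices.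
-/

open Finset

lemma SimpleGraph.ncard_incidenceSet_eq_ncard_neighborSet (G : SimpleGraph β) (v : β) :
    (G.incidenceSet v).ncard = (G.neighborSet v).ncard := by
  classical
  simp only [← Nat.card_coe_set_eq]
  exact Nat.card_congr (G.incidenceSetEquivNeighborSet v)

lemma SimpleGraph.sum_ncard_neighborSet_le [Fintype β] (G : SimpleGraph β) (W : Finset β) :
    ∑ v ∈ W, (G.neighborSet v).ncard ≤ 2 * G.edgeSet.ncard := by
  classical
  calc ∑ v ∈ W, (G.neighborSet v).ncard ≤ ∑ v, (G.neighborSet v).ncard :=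
        sum_le_sum_of_subset (subset_univ W)
    _ = ∑ v, G.degree v := by
        refine sum_congr rfl fun v _ => ?_
        rw [← Nat.card_coe_set_eq, Nat.card_eq_fintype_card, card_neighborSet_eq_degree]
    _ = 2 * G.edgeSet.ncard := by
        rw [sum_degrees_eq_twice_card_edges, ← coe_edgeFinset, Set.ncard_coe_finset]

lemma DegenerateLE.ncard_edgeSet_le [Fintype β] {G : SimpleGraph β} {d : ℕ}
    (hG : DegenerateLE G d) (s : Finset β) {G' : SimpleGraph β} (hle : G' ≤ G)
    (hsupp : G'.support ⊆ s) : G'.edgeSet.ncard ≤ d * #s := by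
  classical
  induction s using Finset.strongInduction generalizing G' with
  | _ s ih =>
  rcases s.eq_empty_or_nonempty with rfl | hs
  · have : G' = ⊥ := G'.support_eq_bot_iff.1 (Set.subset_empty_iff.1 (by simpa using hsupp))
    simp [this]
  obtain ⟨v, hv, hdeg⟩ := hG s hs
  have hrest : (G'.deleteIncidenceSet v).edgeSet.ncard ≤ d * #(s.erase v) := by
    refine ih _ (erase_ssubset hv) ((G'.deleteIncidenceSet_le v).trans hle) ?_
    refine (G'.support_deleteIncidenceSet_subset v).trans ?_
    rw [coe_erase]
    exact Set.sdiff_subset_sdiff_left hsupp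
  have hinc : (G'.incidenceSet v).ncard ≤ d :=
    calc (G'.incidenceSet v).ncard = (G'.neighborSet v).ncard :=
          G'.ncard_incidenceSet_eq_ncard_neighborSet v
      _ ≤ {w ∈ (s : Set β) | G.Adj v w}.ncard :=
          Set.ncard_le_ncard fun w hw => ⟨hsupp ⟨v, G'.adj_symm hw⟩, hle hw⟩
      _ ≤ d := hdeg
  calc G'.edgeSet.ncard
        ≤ (G'.deleteIncidenceSet v).edgeSet.ncard + (G'.incidenceSet v).ncard := by
        rw [edgeSet_deleteIncidenceSet]
        exact Set.ncard_le_ncard_sdiff_add_ncard _ _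
    _ ≤ d * #(s.erase v) + d := add_le_add hrest hinc
    _ = d * #s := by rw [← card_erase_add_one hv, mul_add_one]

lemma DegenerateLE.ncard_edgeSet_le_mul_ncard_support [Fintype β] {G G' : SimpleGraph β} {d : ℕ}
    (hG : DegenerateLE G d) (hle : G' ≤ G) : G'.edgeSet.ncard ≤ d * G'.support.ncard := by
  classical
  rw [Set.ncard_eq_toFinset_card' G'.support]
  exact hG.ncard_edgeSet_le _ hle (by simp)

section Copies

variable {H : SimpleGraph α} {G : SimpleGraph β} {f : α → β} {S T : Finset (α → β)}

lemma IsCopy.copyEdges_subset_edgeSet (hf : IsCopy H G f) : copyEdges H f ⊆ G.edgeSet := by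
  rintro _ ⟨e, he, rfl⟩
  induction e with
  | _ a b => exact hf.2 a b he

lemma unionGraph_mono (hTS : T ⊆ S) : unionGraph H T ≤ unionGraph H S :=
  fromEdgeSet_mono (Set.biUnion_subset_biUnion_left (Finset.coe_subset.2 hTS))

lemma edgeSet_unionGraph (hS : ∀ f ∈ S, IsCopy H G f) :
    (unionGraph H S).edgeSet = ⋃ f ∈ S, copyEdges H f := by
  rw [unionGraph, edgeSet_fromEdgeSet, sdiff_eq_left, Set.disjoint_right]
  intro e he hdiag
  obtain ⟨f, hf, hef⟩ := Set.mem_iUnion₂.1 hdiag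
  exact G.not_isDiag_of_mem_edgeSet ((hS f hf).copyEdges_subset_edgeSet hef) he

lemma unionGraph_le (hS : ∀ f ∈ S, IsCopy H G f) : unionGraph H S ≤ G := by
  rw [← edgeSet_subset_edgeSet, edgeSet_unionGraph hS]
  exact Set.iUnion₂_subset fun f hf => (hS f hf).copyEdges_subset_edgeSet

lemma unionGraph_adj_iff (hS : ∀ f ∈ S, IsCopy H G f) {v w : β} :
    (unionGraph H S).Adj v w ↔ ∃ f ∈ S, s(v, w) ∈ copyEdges H f := by
  rw [← mem_edgeSet, edgeSet_unionGraph hS]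
  simp only [Set.mem_iUnion, exists_prop]

lemma mem_support_unionGraph_iff (hS : ∀ f ∈ S, IsCopy H G f) {v : β} :
    v ∈ (unionGraph H S).support ↔ ∃ f ∈ S, ∃ w, s(v, w) ∈ copyEdges H f := by
  simp only [mem_support, unionGraph_adj_iff hS]
  tauto

def IsPacking (H : SimpleGraph α) (G : SimpleGraph β) (S : Finset (α → β)) : Prop :=
  (∀ f ∈ S, IsCopy H G f) ∧ (S : Set (α → β)).PairwiseDisjoint (copyEdges H)

lemma IsPacking.mono (hS : IsPacking H G S) (hTS : T ⊆ S) : IsPacking H G T :=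
  ⟨fun f hf => hS.1 f (hTS hf), hS.2.subset (Finset.coe_subset.2 hTS)⟩

lemma IsPacking.card_le_ncard_edgeSet_unionGraph [Finite β] (hS : IsPacking H G S)
    (hH : H.edgeSet.Nonempty) : #S ≤ (unionGraph H S).edgeSet.ncard := by
  choose e he using fun f : α → β => hH.image (Sym2.map f)
  rw [← Set.ncard_coe_finset]
  refine Set.ncard_le_ncard_of_injOn e (fun f hf => ?_) (fun f hf g hg hfg => ?_)
  · rw [edgeSet_unionGraph hS.1]
    exact Set.mem_biUnion hf (he f)
  · by_contra hne
    exact Set.disjoint_left.1 (hS.2 hf hg hne) (he f) (hfg ▸ he g)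

open Classical in
lemma IsPacking.card_filter_le_ncard_neighborSet [Finite β] (hS : IsPacking H G S) (v : β) :
    #{f ∈ S | ∃ w, s(v, w) ∈ copyEdges H f} ≤ ((unionGraph H S).neighborSet v).ncard := by
  have : Nonempty β := ⟨v⟩
  choose! w hw using
    fun f (hf : f ∈ {f ∈ S | ∃ w, s(v, w) ∈ copyEdges H f}) => (mem_filter.1 hf).2
  rw [← Set.ncard_coe_finset]
  refine Set.ncard_le_ncard_of_injOn w (fun f hf => ?_) (fun f hf g hg hfg => ?_)
  · exact (unionGraph_adj_iff hS.1).2 ⟨f, (mem_filter.1 hf).1, hw f hf⟩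
  · by_contra hne
    exact Set.disjoint_left.1 (hS.2 (mem_filter.1 hf).1 (mem_filter.1 hg).1 hne) (hw f hf)
      (hfg ▸ hw g hg)

/-- `W` collects the vertices at which copies were deleted. -/
lemma IsPacking.exists_subset_degree_ge [Finite β] (hS : IsPacking H G S) (c : ℝ) :
    ∃ T ⊆ S, ∃ W : Finset β, ↑W ⊆ (unionGraph H S).support ∧
      (#S : ℝ) ≤ #T + c * ∑ v ∈ W, ((G.neighborSet v).ncard : ℝ) ∧
      ∀ v ∈ (unionGraph H T).support,
        (((unionGraph H T).neighborSet v).ncard : ℝ) ≥ c * (G.neighborSet v).ncard := by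
  classical
  induction S using Finset.strongInduction with
  | _ S ih =>
  by_cases hgood : ∀ v ∈ (unionGraph H S).support,
      (((unionGraph H S).neighborSet v).ncard : ℝ) ≥ c * (G.neighborSet v).ncard
  · exact ⟨S, subset_rfl, ∅, by simp, by simp, hgood⟩
  push Not at hgood
  obtain ⟨v, hv, hbad⟩ := hgood
  set S' := {f ∈ S | ¬ ∃ w, s(v, w) ∈ copyEdges H f}
  have hS'S : S' ⊂ S := filter_ssubset.2 (by simpa using (mem_support_unionGraph_iff hS.1).1 hv)
  have hvS' : v ∉ (unionGraph H S').support := by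
    rw [mem_support_unionGraph_iff (hS.mono hS'S.subset).1]
    simp [S']
  obtain ⟨T, hTS', W, hWS', hcard, hT⟩ := ih S' hS'S (hS.mono hS'S.subset)
  refine ⟨T, hTS'.trans hS'S.subset, insert v W, ?_, ?_, hT⟩
  · rw [coe_insert]
    exact Set.insert_subset hv (hWS'.trans (support_mono (unionGraph_mono hS'S.subset)))
  · have hsplit : (#S : ℝ) = #{f ∈ S | ∃ w, s(v, w) ∈ copyEdges H f} + #S' := by
      exact_mod_cast (card_filter_add_card_filter_not _).symm
    have hremoved : (#{f ∈ S | ∃ w, s(v, w) ∈ copyEdges H f} : ℝ) ≤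
        ((unionGraph H S).neighborSet v).ncard := by
      exact_mod_cast hS.card_filter_le_ncard_neighborSet v
    rw [sum_insert fun h => hvS' (hWS' h), mul_add]
    linarith

end Copies

theorem stmt2_general [Fintype β] (H : SimpleGraph α) (G : SimpleGraph β)
    (d : ℕ) (hd : 0 < d) (a : ℝ) (ha : 0 < a)
    (hHedge : H.edgeSet.Nonempty)
    (hdeg : DegenerateLE G d)
    (𝓗 : Finset (α → β))
    (hcopies : ∀ f ∈ 𝓗, IsCopy H G f)
    (hdisj : ∀ f ∈ 𝓗, ∀ g ∈ 𝓗, f ≠ g → Disjoint (copyEdges H f) (copyEdges H g))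
    (hcard : (𝓗.card : ℝ) ≥ a * Fintype.card β) :
    ∃ 𝓗' ⊆ 𝓗, (𝓗'.card : ℝ) ≥ a * Fintype.card β / 2 ∧
      DegreePreserving G (unionGraph H 𝓗') (a / (4 * d)) := by
  have hpack : IsPacking H G 𝓗 := ⟨hcopies, fun f hf g hg hfg => hdisj f hf g hg hfg⟩
  obtain ⟨T, hT𝓗, W, -, hcount, hdegT⟩ := hpack.exists_subset_degree_ge (a / (4 * d))
  have hW : ∑ v ∈ W, ((G.neighborSet v).ncard : ℝ) ≤ 2 * (d * Fintype.card β) := by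
    have hE := hdeg.ncard_edgeSet_le univ le_rfl (by simp)
    rw [card_univ] at hE
    exact_mod_cast (G.sum_ncard_neighborSet_le W).trans (by omega)
  have hd' : (0 : ℝ) < d := by exact_mod_cast hd
  have hTcard : (#T : ℝ) ≥ a * Fintype.card β / 2 := by
    have : a / (4 * d) * ∑ v ∈ W, ((G.neighborSet v).ncard : ℝ) ≤ a * Fintype.card β / 2 :=
      calc _ ≤ a / (4 * d) * (2 * (d * Fintype.card β)) := by gcongr
        _ = a * Fintype.card β / 2 := by field_simp; ring
    linarith
  have hTsupp : (#T : ℝ) ≤ d * (unionGraph H T).support.ncard := by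
    have hpackT := hpack.mono hT𝓗
    exact_mod_cast (hpackT.card_le_ncard_edgeSet_unionGraph hHedge).trans
      (hdeg.ncard_edgeSet_le_mul_ncard_support (unionGraph_le hpackT.1))
  refine ⟨T, hT𝓗, hTcard, ?_, hdegT⟩
  rw [ge_iff_le, div_mul_eq_mul_div, div_le_iff₀ (by positivity)]
  nlinarith

/-- In a `d`-degenerate graph `G`, any set `𝓗` of at least `α·|V(G)|`
edge-disjoint copies of a graph `H` (with an edge) contains a subset `𝓗'` of at least
`α·|V(G)|/2` copies such that `G[𝓗']` is `(α/4d)`-degree preserving. -/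
theorem stmt2 [Fintype α] [Fintype β] (H : SimpleGraph α) (G : SimpleGraph β)
    (d : ℕ) (hd : 0 < d) (a : ℝ) (ha : 0 < a)
    (hHedge : H.edgeSet.Nonempty)
    (hdeg : DegenerateLE G d)
    (𝓗 : Finset (α → β))
    (hcopies : ∀ f ∈ 𝓗, IsCopy H G f)
    (hdisj : ∀ f ∈ 𝓗, ∀ g ∈ 𝓗, f ≠ g → Disjoint (copyEdges H f) (copyEdges H g))
    (hcard : (𝓗.card : ℝ) ≥ a * Fintype.card β) :
    ∃ 𝓗' ⊆ 𝓗, (𝓗'.card : ℝ) ≥ a * Fintype.card β / 2 ∧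
      DegreePreserving G (unionGraph H 𝓗') (a / (4 * d)) :=
  stmt2_general H G d hd a ha hHedge hdeg 𝓗 hcopies hdisj hcard
end

section
/- Let 𝓗 be a set of N edge-disjoint copies of a graph H in a graph G. Then there exists a subset 𝓗' ⊆ 𝓗 of cardinality at least N/|V(H)|^{|V(H)|} that is uniformly colored: for all copies h, h' ∈ 𝓗' and vertices a, a' ∈ V(H), if h(a) = h'(a') then a = a'. -/
open SimpleGraph

variable {α β : Type*}

lemma count_ext [Fintype α] [Fintype β] [Nonempty α] [DecidableEq β] {h : α → β}
    [DecidablePred fun f : β → α => ∀ a, f (h a) = a]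
    (hinj : Function.Injective h) :
    (Finset.univ.filter fun f : β → α => ∀ a, f (h a) = a).card
      = Fintype.card α ^ (Fintype.card β - Fintype.card α) := by
  classical
  rw [← Fintype.card_subtype]
  have e : {f : β → α // ∀ a, f (h a) = a} ≃ ({b : β // b ∉ Set.range h} → α) :=
    { toFun := fun f g => f.1 g.1
      invFun := fun g => ⟨fun b => if hb : b ∈ Set.range h then Function.invFun h b
          else g ⟨b, hb⟩, by
        intro a
        have : h a ∈ Set.range h := ⟨a, rfl⟩
        simp [this, Function.leftInverse_invFun hinj a]⟩
      left_inv := by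
        rintro ⟨f, hf⟩
        ext b
        by_cases hb : b ∈ Set.range h
        · obtain ⟨a, rfl⟩ := hb
          simp [Set.mem_range_self, Function.leftInverse_invFun hinj a, hf a]
        · simp [hb]
      right_inv := by
        intro g
        ext b
        simp [b.2] }
  rw [Fintype.card_congr e, Fintype.card_fun]
  congr 1
  rw [Fintype.card_subtype_compl]
  congr 1
  exact Set.card_range_of_injective hinj

set_option maxHeartbeats 1000000 in
/-- Any set `𝓗` of `N` edge-disjoint copies of `H` in `G` contains a
uniformly colored subset of at least `N / |V(H)|^{|V(H)|}` copies: any two copies of the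
subset agree on the `H`-vertex assigned to each shared vertex of `G`. -/
theorem stmt3 [Fintype α] [Fintype β] (H : SimpleGraph α) (G : SimpleGraph β)
    (𝓗 : Finset (α → β))
    (hcopies : ∀ f ∈ 𝓗, IsCopy H G f)
    (hdisj : ∀ f ∈ 𝓗, ∀ g ∈ 𝓗, f ≠ g → Disjoint (copyEdges H f) (copyEdges H g)) :
    ∃ 𝓗' ⊆ 𝓗,
      (𝓗'.card : ℝ) ≥ 𝓗.card / (Fintype.card α : ℝ) ^ (Fintype.card α) ∧
      ∀ h ∈ 𝓗', ∀ h' ∈ 𝓗', ∀ a a', h a = h' a' → a = a' := by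
  classical
  cases isEmpty_or_nonempty α with
  | inl hα =>
    refine ⟨𝓗, Finset.Subset.refl _, ?_, fun h _ h' _ a => (hα.false a).elim⟩
    have : Fintype.card α = 0 := Fintype.card_eq_zero
    simp [this]
  | inr hα =>
    rcases 𝓗.eq_empty_or_nonempty with rfl | ⟨h0, h0mem⟩
    · exact ⟨∅, Finset.Subset.refl _, by simp, by simp⟩
    have hβα : Fintype.card α ≤ Fintype.card β :=
      Fintype.card_le_of_injective _ (hcopies h0 h0mem).1
    have hKpos : 0 < Fintype.card α ^ (Fintype.card β - Fintype.card α) :=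
      pow_pos Fintype.card_pos _
    obtain ⟨f, -, hf⟩ := Finset.exists_max_image (Finset.univ : Finset (β → α))
      (fun g => (𝓗.filter fun h => ∀ a, g (h a) = a).card) Finset.univ_nonempty
    have hsum : ∑ g : β → α, (𝓗.filter fun h => ∀ a, g (h a) = a).card
        = 𝓗.card * Fintype.card α ^ (Fintype.card β - Fintype.card α) := by
      simp only [Finset.card_filter]
      rw [Finset.sum_comm]
      refine Eq.trans (Finset.sum_congr rfl fun h hmem => ?_)
        (by rw [Finset.sum_const, smul_eq_mul])
      rw [← Finset.card_filter]
      exact count_ext (hcopies h hmem).1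
    have hub : 𝓗.card * Fintype.card α ^ (Fintype.card β - Fintype.card α)
        ≤ Fintype.card α ^ Fintype.card β
          * (𝓗.filter fun h => ∀ a, f (h a) = a).card := by
      rw [← hsum, ← Fintype.card_fun (α := β) (β := α), ← Finset.card_univ,
        ← smul_eq_mul]
      exact Finset.sum_le_card_nsmul _ _ _ (fun g _ => hf g (Finset.mem_univ g))
    have key : 𝓗.card ≤ Fintype.card α ^ Fintype.card α
        * (𝓗.filter fun h => ∀ a, f (h a) = a).card := by
      refine Nat.le_of_mul_le_mul_right ?_ hKpos
      calc 𝓗.card * Fintype.card α ^ (Fintype.card β - Fintype.card α)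
          ≤ Fintype.card α ^ Fintype.card β
            * (𝓗.filter fun h => ∀ a, f (h a) = a).card := hub
        _ = Fintype.card α ^ Fintype.card α
            * (𝓗.filter fun h => ∀ a, f (h a) = a).card
            * Fintype.card α ^ (Fintype.card β - Fintype.card α) := by
            rw [show Fintype.card α ^ Fintype.card β
              = Fintype.card α ^ Fintype.card α
                * Fintype.card α ^ (Fintype.card β - Fintype.card α) by
              rw [← pow_add, Nat.add_sub_cancel' hβα]]
            ring
    refine ⟨𝓗.filter fun h => ∀ a, f (h a) = a, Finset.filter_subset _ _, ?_, ?_⟩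
    · rw [ge_iff_le, div_le_iff₀ (by positivity)]
      have : (𝓗.card : ℝ) ≤ (Fintype.card α ^ Fintype.card α
          * (𝓗.filter fun h => ∀ a, f (h a) = a).card : ℕ) := by exact_mod_cast key
      push_cast at this
      linarith
    · intro h hmem h' hmem' a a' heq
      rw [Finset.mem_filter] at hmem hmem'
      have := hmem.2 a
      rw [heq, hmem'.2 a'] at this
      exact this.symm
end

section
/- Let G be a graph admitting a p-treedepth coloring with ℓ colors, where p = |V(H)| for a fixed graph H, and let 𝓗 be a set of edge-disjoint copies of H in G. Then there exists 𝓗' ⊆ 𝓗 with |𝓗'| ≥ |𝓗|/ℓ^{|V(H)|} such that the subgraph G[𝓗'] induced by the copies in 𝓗' has treedepth at most |V(H)|. -/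
open SimpleGraph

variable {α β : Type*}

/-- A tree embedding of `G`: a partial order in which down-sets of vertices are chains
and adjacent vertices are comparable. -/
structure TreeEmbedding (G : SimpleGraph β) where
  le : β → β → Prop
  refl : ∀ a, le a a
  antisymm : ∀ a b, le a b → le b a → a = b
  trans : ∀ a b c, le a b → le b c → le a c
  downChain : ∀ v a b, le a v → le b v → le a b ∨ le b a
  adjComparable : ∀ a b, G.Adj a b → le a b ∨ le b a

/-- The depth of a tree embedding is at most `k`: every chain has at most `k` elements. -/
def TreeEmbedding.DepthLE {G : SimpleGraph β} (T : TreeEmbedding G) (k : ℕ) : Prop :=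
  ∀ s : Finset β, (∀ a ∈ s, ∀ b ∈ s, T.le a b ∨ T.le b a) → s.card ≤ k

/-- The treedepth of `G` is at most `k`. -/
def TreedepthLE (G : SimpleGraph β) (k : ℕ) : Prop :=
  ∃ T : TreeEmbedding G, T.DepthLE k

/-- The subgraph of `G` induced by a vertex set `s`, viewed as a graph on the same
vertex type. -/
def restrictTo (G : SimpleGraph β) (s : Set β) : SimpleGraph β where
  Adj a b := G.Adj a b ∧ a ∈ s ∧ b ∈ s
  symm := ⟨fun a b ⟨h, ha, hb⟩ => ⟨h.symm, hb, ha⟩⟩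
  loopless := ⟨fun a ⟨h, _, _⟩ => G.irrefl h⟩

/-- `c` is a `p`-treedepth coloring of `G` (with colors `Fin ℓ`): for every nonempty set
`S` of at most `p` colors, the subgraph induced by the vertices colored in `S` has
treedepth at most `|S|`. -/
def IsTreedepthColoring (G : SimpleGraph β) (p ℓ : ℕ) (c : β → Fin ℓ) : Prop :=
  ∀ S : Finset (Fin ℓ), S.Nonempty → S.card ≤ p →
    TreedepthLE (restrictTo G {v | c v ∈ S}) S.card

/-!
Color each copy `f ∈ 𝓗` by its color pattern `c ∘ f : α → Fin ℓ`. There are `ℓ ^ |V(H)|`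
patterns, so by pigeonhole some pattern `t` is shared by at least `|𝓗| / ℓ ^ |V(H)|` copies.
All edges of these copies lie inside the vertices colored by the at most `|V(H)|` colors in
the range of `t`, and there the coloring bounds the treedepth by `|V(H)|`.
-/

namespace TreedepthLE

theorem mono {G G' : SimpleGraph β} {k k' : ℕ} (hG : G' ≤ G) (hk : k ≤ k')
    (h : TreedepthLE G k) : TreedepthLE G' k' := by
  obtain ⟨T, hT⟩ := h
  exact ⟨{ T with adjComparable := fun a b hab => T.adjComparable a b (hG hab) },
    fun s hs => (hT s hs).trans hk⟩

theorem bot : TreedepthLE (⊥ : SimpleGraph β) 1 :=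
  ⟨{ le := Eq
     refl := fun _ => rfl
     antisymm := fun _ _ h _ => h
     trans := fun _ _ _ => Eq.trans
     downChain := fun _ _ _ ha hb => Or.inl (ha.trans hb.symm)
     adjComparable := fun _ _ h => h.elim },
   fun _ hs => Finset.card_le_one.2 fun a ha b hb => (hs a ha b hb).elim id Eq.symm⟩

end TreedepthLE

theorem unionGraph_empty (H : SimpleGraph α) : unionGraph H (∅ : Finset (α → β)) = ⊥ := by
  simp [unionGraph]

theorem unionGraph_le_restrictTo {H : SimpleGraph α} {G : SimpleGraph β}
    {𝓗 : Finset (α → β)} {s : Set β} (hcopies : ∀ f ∈ 𝓗, IsCopy H G f)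
    (hs : ∀ f ∈ 𝓗, ∀ a, f a ∈ s) : unionGraph H 𝓗 ≤ restrictTo G s := by
  intro u v huv
  obtain ⟨huv, -⟩ := (fromEdgeSet_adj _).1 huv
  obtain ⟨f, hf, e, he, hfe⟩ := Set.mem_iUnion₂.1 huv
  induction e using Sym2.ind with
  | h x y =>
    have hxy : G.Adj (f x) (f y) := (hcopies f hf).2 x y he
    rcases Sym2.eq_iff.1 (Sym2.map_mk f x y ▸ hfe) with ⟨rfl, rfl⟩ | ⟨rfl, rfl⟩
    · exact ⟨hxy, hs f hf x, hs f hf y⟩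
    · exact ⟨hxy.symm, hs f hf y, hs f hf x⟩

theorem stmt4_general [Fintype α] [Nonempty α] (H : SimpleGraph α) (G : SimpleGraph β)
    (ℓ : ℕ) (c : β → Fin ℓ)
    (hcol : IsTreedepthColoring G (Fintype.card α) ℓ c)
    (𝓗 : Finset (α → β))
    (hcopies : ∀ f ∈ 𝓗, IsCopy H G f) :
    ∃ 𝓗' ⊆ 𝓗,
      (𝓗'.card : ℝ) ≥ 𝓗.card / (ℓ : ℝ) ^ (Fintype.card α) ∧
      TreedepthLE (unionGraph H 𝓗') (Fintype.card α) := by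
  classical
  rcases 𝓗.eq_empty_or_nonempty with rfl | ⟨f₀, -⟩
  · refine ⟨∅, subset_rfl, by simp, ?_⟩
    rw [unionGraph_empty]
    exact TreedepthLE.bot.mono le_rfl Fintype.card_pos
  have hℓ : (0 : ℝ) < ℓ := Nat.cast_pos.2 (c (f₀ (Classical.arbitrary α))).pos
  have hcard : (Finset.univ : Finset (α → Fin ℓ)).card • ((𝓗.card : ℝ) / ℓ ^ Fintype.card α)
      = 𝓗.card := by
    simp [mul_div_cancel₀, hℓ.ne']
  obtain ⟨t, -, ht⟩ := Finset.exists_le_card_fiber_of_nsmul_le_card_of_maps_to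
    (f := fun f : α → β => c ∘ f) (fun f _ => Finset.mem_univ _) ⟨c ∘ f₀, Finset.mem_univ _⟩
    hcard.le
  set S : Finset (Fin ℓ) := Finset.univ.image t
  have hS : S.card ≤ Fintype.card α := Finset.card_image_le
  refine ⟨𝓗.filter (c ∘ · = t), Finset.filter_subset _ _, ht, ?_⟩
  refine (hcol S (Finset.univ_nonempty.image t) hS).mono
    (unionGraph_le_restrictTo (fun f hf => hcopies f (Finset.mem_filter.1 hf).1) ?_) hS
  intro f hf a
  exact Finset.mem_image.2 ⟨a, Finset.mem_univ a, congrFun (Finset.mem_filter.1 hf).2.symm a⟩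

/-- If `G` admits a `|V(H)|`-treedepth coloring with `ℓ` colors and `𝓗`
is a set of edge-disjoint copies of `H` in `G`, then some `𝓗' ⊆ 𝓗` of size at least
`|𝓗|/ℓ^{|V(H)|}` satisfies that `G[𝓗']` has treedepth at most `|V(H)|`. -/
theorem stmt4 [Fintype α] [Nonempty α] [Fintype β] (H : SimpleGraph α) (G : SimpleGraph β)
    (ℓ : ℕ) (c : β → Fin ℓ)
    (hcol : IsTreedepthColoring G (Fintype.card α) ℓ c)
    (𝓗 : Finset (α → β))
    (hcopies : ∀ f ∈ 𝓗, IsCopy H G f)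
    (hdisj : ∀ f ∈ 𝓗, ∀ g ∈ 𝓗, f ≠ g → Disjoint (copyEdges H f) (copyEdges H g)) :
    ∃ 𝓗' ⊆ 𝓗,
      (𝓗'.card : ℝ) ≥ 𝓗.card / (ℓ : ℝ) ^ (Fintype.card α) ∧
      TreedepthLE (unionGraph H 𝓗') (Fintype.card α) :=
  stmt4_general H G ℓ c hcol 𝓗 hcopies
end

section
/- Let G have treedepth at most d, witnessed by a tree embedding ≤_T of depth d, and let 𝓗 be a uniformly colored set of edge-disjoint copies of a graph H in G with |V(H)| = k. Then there exists 𝓗' ⊆ 𝓗 with |𝓗'| ≥ |𝓗|/d^k such that all copies in 𝓗' map each fixed vertex a of H to vertices lying at the same level of ≤_T (i.e., the restriction of ≤_T to G[𝓗'] is uniformly layered with respect to 𝓗'). -/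
open SimpleGraph

variable {α β : Type*}

/-- The level of a vertex in a tree embedding: the number of elements strictly below it. -/
noncomputable def TreeEmbedding.level {G : SimpleGraph β} (T : TreeEmbedding G) (v : β) : ℕ :=
  {u | T.le u v ∧ u ≠ v}.ncard


lemma level_lt_aux {G : SimpleGraph β} [Fintype β] (T : TreeEmbedding G) (d : ℕ)
    (hdepth : T.DepthLE d) (v : β) : T.level v < d := by
  classical
  set s : Finset β := Finset.univ.filter (fun u => T.le u v) with hs
  have hchain : ∀ a ∈ s, ∀ b ∈ s, T.le a b ∨ T.le b a := by
    intro a ha b hb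
    simp only [hs, Finset.mem_filter] at ha hb
    exact T.downChain v a b ha.2 hb.2
  have hcard := hdepth s hchain
  have hv : v ∈ s := by simp [hs, T.refl]
  have h1 : 1 ≤ s.card := Finset.card_pos.mpr ⟨v, hv⟩
  have heq : {u | T.le u v ∧ u ≠ v} = ↑(s.erase v) := by
    ext u; simp [hs, and_comm]
  rw [TreeEmbedding.level, heq, Set.ncard_coe_finset, Finset.card_erase_of_mem hv]
  omega

/-- If `G` has a tree embedding of depth `d` and `𝓗` is a uniformly
colored set of edge-disjoint copies of `H` (`|V(H)| = k`), then some `𝓗' ⊆ 𝓗` with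
`|𝓗'| ≥ |𝓗|/d^k` is such that all copies in `𝓗'` map each fixed vertex of `H` to
vertices of the same level (i.e. `≤_T` restricted to `G[𝓗']` is uniformly layered). -/
theorem stmt5 [Fintype α] [Fintype β] (H : SimpleGraph α) (G : SimpleGraph β)
    (d : ℕ) (T : TreeEmbedding G) (hdepth : T.DepthLE d)
    (𝓗 : Finset (α → β))
    (hcopies : ∀ f ∈ 𝓗, IsCopy H G f)
    (hdisj : ∀ f ∈ 𝓗, ∀ g ∈ 𝓗, f ≠ g → Disjoint (copyEdges H f) (copyEdges H g))
    (hunif : ∀ h ∈ 𝓗, ∀ h' ∈ 𝓗, ∀ a a', h a = h' a' → a = a') :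
    ∃ 𝓗' ⊆ 𝓗,
      (𝓗'.card : ℝ) ≥ 𝓗.card / (d : ℝ) ^ (Fintype.card α) ∧
      ∀ a : α, ∀ h ∈ 𝓗', ∀ h' ∈ 𝓗', T.level (h a) = T.level (h' a) := by
  classical
  rcases Finset.eq_empty_or_nonempty 𝓗 with h𝓗 | h𝓗
  · refine ⟨∅, Finset.empty_subset _, ?_, by simp⟩
    simp [h𝓗]
  · set ℓ : (α → β) → (α → ℕ) := fun g a => T.level (g a) with hℓ
    set t : Finset (α → ℕ) := 𝓗.image ℓ with ht'
    have htsub : t ⊆ Finset.image (fun (x : α → Fin d) a => (x a : ℕ)) Finset.univ := by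
      intro x hx
      obtain ⟨g, hg, rfl⟩ := Finset.mem_image.mp hx
      exact Finset.mem_image.mpr
        ⟨fun a => ⟨T.level (g a), level_lt_aux T d hdepth (g a)⟩, Finset.mem_univ _, rfl⟩
    have ht : t.card ≤ d ^ Fintype.card α := by
      calc t.card ≤ _ := Finset.card_le_card htsub
        _ ≤ (Finset.univ : Finset (α → Fin d)).card := Finset.card_image_le
        _ = d ^ Fintype.card α := by simp [Fintype.card_fun]
    have hne : t.Nonempty := h𝓗.image ℓ
    obtain ⟨y, hy, hmax⟩ := t.exists_max_image (fun y => (𝓗.filter (fun g => ℓ g = y)).card) hne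
    have hsum : 𝓗.card = ∑ y ∈ t, (𝓗.filter (fun g => ℓ g = y)).card :=
      Finset.card_eq_sum_card_fiberwise (fun g hg => Finset.mem_image_of_mem _ hg)
    have hle : 𝓗.card ≤ d ^ Fintype.card α * (𝓗.filter (fun g => ℓ g = y)).card := by
      calc 𝓗.card = ∑ y ∈ t, (𝓗.filter (fun g => ℓ g = y)).card := hsum
        _ ≤ t.card * (𝓗.filter (fun g => ℓ g = y)).card := by
            simpa using Finset.sum_le_card_nsmul t _ _ (fun x hx => hmax x hx)
        _ ≤ _ := Nat.mul_le_mul_right _ ht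
    have hdk : 1 ≤ d ^ Fintype.card α := le_trans (Finset.card_pos.mpr hne) ht
    refine ⟨𝓗.filter (fun g => ℓ g = y), Finset.filter_subset _ _, ?_, ?_⟩
    · have hpos : (0 : ℝ) < (d : ℝ) ^ Fintype.card α := by
        have : (1 : ℝ) ≤ (d : ℝ) ^ Fintype.card α := by exact_mod_cast Nat.one_le_cast.mpr hdk
        linarith
      rw [ge_iff_le, div_le_iff₀ hpos]
      have : (𝓗.card : ℝ) ≤ ((d ^ Fintype.card α : ℕ) : ℝ) *
          ((𝓗.filter (fun g => ℓ g = y)).card : ℝ) := by exact_mod_cast hle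
      push_cast at this ⊢
      nlinarith
    · intro a h hh h' hh'
      rw [Finset.mem_filter] at hh hh'
      have h1 := congrFun hh.2 a
      have h2 := congrFun hh'.2 a
      simp only [hℓ] at h1 h2
      rw [h1, h2]
end

section
/- Let 𝓗 be a set of edge-disjoint copies of a graph H in a graph G such that G[𝓗] admits a uniformly layered tree embedding with respect to 𝓗. Let u be a vertex of H lying in a parallel part (an inner vertex with respect to the ordering induced by layers), and let h ∈ 𝓗. Then the neighborhood of h(u) in G[𝓗] is exactly h(N_H(u)), the image under h of the neighborhood of u in H. In particular, every vertex of G[𝓗] that is in the image of two distinct copies of 𝓗 is the image of a source. -/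
open SimpleGraph

variable {α β : Type*}

/-- A uniformly layered tree embedding of `G𝓗 = G[𝓗]` with respect to `𝓗`: a tree
partial order in which down-sets are chains, adjacent vertices are comparable, together
with a level function strictly increasing along the order, such that every copy sends
each vertex `a` of `H` to the level `lvlH a`, distinct vertices of `H` having distinct
levels. -/
structure ULEmbedding (H : SimpleGraph α) (G𝓗 : SimpleGraph β)
    (𝓗 : Finset (α → β)) (lvlH : α → ℕ) where
  le : β → β → Prop
  refl : ∀ a, le a a
  antisymm : ∀ a b, le a b → le b a → a = b
  trans : ∀ a b c, le a b → le b c → le a c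
  downChain : ∀ v a b, le a v → le b v → le a b ∨ le b a
  adjComparable : ∀ a b, G𝓗.Adj a b → le a b ∨ le b a
  lvl : β → ℕ
  lvlMono : ∀ a b, le a b → a ≠ b → lvl a < lvl b
  layered : ∀ h ∈ 𝓗, ∀ a, lvl (h a) = lvlH a
  lvlHinj : Function.Injective lvlH

/-- A vertex of `H` is *inner* (belongs to a parallel part) with respect to the layer
ordering if it has a neighbor at an earlier level; otherwise it is a *source*. -/
def InnerAt (H : SimpleGraph α) (lvlH : α → ℕ) (u : α) : Prop :=
  ∃ v, H.Adj u v ∧ lvlH v < lvlH u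


lemma copyEdges_mem {H : SimpleGraph α} {f : α → β} {x y : β} :
    s(x, y) ∈ copyEdges H f ↔ ∃ a b, H.Adj a b ∧ f a = x ∧ f b = y := by
  constructor
  · rintro ⟨e, he, hmap⟩
    induction e with
    | h a b =>
      rw [Sym2.map_pair_eq, Sym2.eq_iff] at hmap
      rcases hmap with ⟨h1, h2⟩ | ⟨h1, h2⟩
      · exact ⟨a, b, he, h1, h2⟩
      · exact ⟨b, a, (H.mem_edgeSet.mp he).symm, h2, h1⟩
  · rintro ⟨a, b, hab, rfl, rfl⟩
    exact ⟨s(a, b), hab, by rw [Sym2.map_pair_eq]⟩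

lemma unionGraph_adj {H : SimpleGraph α} {𝓗 : Finset (α → β)} {x y : β} :
    (unionGraph H 𝓗).Adj x y ↔ (∃ f ∈ 𝓗, s(x, y) ∈ copyEdges H f) ∧ x ≠ y := by
  simp [unionGraph, SimpleGraph.fromEdgeSet_adj]

lemma copy_adj {H : SimpleGraph α} {G : SimpleGraph β} {𝓗 : Finset (α → β)} {h : α → β}
    (hH : h ∈ 𝓗) (hc : ∀ f ∈ 𝓗, IsCopy H G f) {a b : α} (hab : H.Adj a b) :
    (unionGraph H 𝓗).Adj (h a) (h b) := by
  rw [unionGraph_adj]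
  exact ⟨⟨h, hH, copyEdges_mem.mpr ⟨a, b, hab, rfl, rfl⟩⟩,
    fun he => hab.ne ((hc h hH).1 he)⟩

/-- Key lemma: two copies agreeing at an inner vertex are equal. -/
lemma copies_eq_of_inner {H : SimpleGraph α} {G : SimpleGraph β} {𝓗 : Finset (α → β)}
    {lvlH : α → ℕ}
    (hcopies : ∀ f ∈ 𝓗, IsCopy H G f)
    (hdisj : ∀ f ∈ 𝓗, ∀ g ∈ 𝓗, f ≠ g → Disjoint (copyEdges H f) (copyEdges H g))
    (T : ULEmbedding H (unionGraph H 𝓗) 𝓗 lvlH)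
    {h g : α → β} (hH : h ∈ 𝓗) (gH : g ∈ 𝓗) {u : α}
    (hin : InnerAt H lvlH u) (hgu : g u = h u) : g = h := by
  obtain ⟨v, huv, hlt⟩ := hin
  -- h v ≤ h u
  have step : ∀ f ∈ 𝓗, T.le (f v) (f u) := by
    intro f fH
    have hadj := copy_adj fH hcopies huv
    have hne : f u ≠ f v := fun he => huv.ne ((hcopies f fH).1 he)
    rcases T.adjComparable _ _ hadj with h1 | h1
    · exfalso
      have := T.lvlMono _ _ h1 hne
      rw [T.layered f fH, T.layered f fH] at this
      omega
    · exact h1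
  have h1 := step h hH
  have h2 := step g gH
  rw [hgu] at h2
  have hv : g v = h v := by
    rcases T.downChain _ _ _ h2 h1 with h3 | h3
    · by_contra hne
      have := T.lvlMono _ _ h3 hne
      rw [T.layered g gH, T.layered h hH] at this
      omega
    · by_contra hne
      have := T.lvlMono _ _ h3 (Ne.symm hne)
      rw [T.layered g gH, T.layered h hH] at this
      omega
  by_contra hne
  have hd := hdisj g gH h hH hne
  have e1 : s(g u, g v) ∈ copyEdges H g := copyEdges_mem.mpr ⟨u, v, huv, rfl, rfl⟩
  have e2 : s(g u, g v) ∈ copyEdges H h := by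
    rw [hgu, hv]; exact copyEdges_mem.mpr ⟨u, v, huv, rfl, rfl⟩
  exact (Set.disjoint_left.mp hd e1) e2

/-- If `𝓗` is a uniformly colored set of edge-disjoint copies of `H`
and `G[𝓗]` has a uniformly layered tree embedding, then for every copy `h ∈ 𝓗` and
every inner vertex `u` of `H`, the neighborhood of `h u` in `G[𝓗]` is exactly
`h '' N_H(u)`; in particular, every vertex of `G[𝓗]` in the image of two distinct
copies is the image of a source. -/
theorem stmt9 [Fintype α] [Fintype β] (H : SimpleGraph α) (G : SimpleGraph β)
    (𝓗 : Finset (α → β)) (lvlH : α → ℕ)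
    (hcopies : ∀ f ∈ 𝓗, IsCopy H G f)
    (hdisj : ∀ f ∈ 𝓗, ∀ g ∈ 𝓗, f ≠ g → Disjoint (copyEdges H f) (copyEdges H g))
    (hunif : ∀ h ∈ 𝓗, ∀ h' ∈ 𝓗, ∀ a a', h a = h' a' → a = a')
    (T : ULEmbedding H (unionGraph H 𝓗) 𝓗 lvlH) :
    (∀ h ∈ 𝓗, ∀ u, InnerAt H lvlH u →
      (unionGraph H 𝓗).neighborSet (h u) = h '' H.neighborSet u) ∧
    (∀ h ∈ 𝓗, ∀ h' ∈ 𝓗, h ≠ h' → ∀ v : β, (∃ a, h a = v) → (∃ a', h' a' = v) →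
      ∃ s, ¬ InnerAt H lvlH s ∧ h s = v) := by
  constructor
  · intro h hH u hin
    ext w
    simp only [SimpleGraph.mem_neighborSet, Set.mem_image, SimpleGraph.mem_neighborSet]
    constructor
    · intro hadj
      rw [unionGraph_adj] at hadj
      obtain ⟨⟨g, gH, hge⟩, hne⟩ := hadj
      rw [copyEdges_mem] at hge
      obtain ⟨a, b, hab, ha, hb⟩ := hge
      have hau : a = u := hunif g gH h hH a u ha
      subst hau
      have : g = h := copies_eq_of_inner hcopies hdisj T hH gH hin ha
      subst this
      exact ⟨b, hab, hb⟩
    · rintro ⟨b, hb, rfl⟩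
      exact copy_adj hH hcopies hb
  · intro h hH h' hH' hne v ⟨a, ha⟩ ⟨a', ha'⟩
    refine ⟨a, ?_, ha⟩
    intro hin
    have haa : a = a' := hunif h hH h' hH' a a' (ha.trans ha'.symm)
    subst haa
    have : h' = h := copies_eq_of_inner hcopies hdisj T hH hH' hin (ha'.trans ha.symm)
    exact hne this.symm
end
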